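/- The subdivision of any tree is singular with nullity exactly 1. -/

import Mathlib

open scoped Classical
open Matrix Polynomial

variable {V : Type*} [Fintype V] [DecidableEq V]

/-- Nullity of a real square matrix: dimension of its kernel. -/
noncomputable def nullity {m : Type*} [Fintype m] (A : Matrix m m ℝ) : ℕ :=
  Module.finrank ℝ (LinearMap.ker A.mulVecLin)

/-- The vertex-edge incidence matrix of `G`, with rows indexed by vertices and
columns indexed by edges. -/
noncomputable def incMat (G : SimpleGraph V) : Matrix V G.edgeSet ℝ :=
  Matrix.of fun v e => if v ∈ (e : Sym2 V) then 1 else 0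

/-- The adjacency matrix of the subdivision of `G`: vertices are `V(G) ⊕ E(G)`. -/
noncomputable def subdivAdj (G : SimpleGraph V) : Matrix (V ⊕ G.edgeSet) (V ⊕ G.edgeSet) ℝ :=
  Matrix.fromBlocks 0 (incMat G) (incMat G)ᵀ 0

/-! The adjacency matrix of the subdivision is the block matrix `[[0, B], [Bᵀ, 0]]` with `B` the
incidence matrix of `T`, so its kernel is `ker Bᵀ × ker B`. A vector in `ker Bᵀ` satisfies
`x u = -x v` along every edge; multiplied by the `±1` sign vector of a proper 2-colouring it becomes
constant, so for a connected bipartite graph such as `T` the space `ker Bᵀ` is a line. Rank–nullity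
together with `|E| = |V| - 1` then forces `ker B = 0`. -/

section

variable {R m n : Type*} [CommSemiring R] [Fintype m] [Fintype n]

theorem Matrix.mem_ker_fromBlocks_zero_zero_iff (B : Matrix m n R) (C : Matrix n m R)
    (x : m ⊕ n → R) :
    x ∈ LinearMap.ker (fromBlocks 0 B C 0).mulVecLin ↔
      x ∘ Sum.inl ∈ LinearMap.ker C.mulVecLin ∧ x ∘ Sum.inr ∈ LinearMap.ker B.mulVecLin := by
  simp only [LinearMap.mem_ker, mulVecLin_apply, fromBlocks_mulVec, zero_mulVec, zero_add,
    add_zero, funext_iff, Sum.forall, Sum.elim_inl, Sum.elim_inr, Pi.zero_apply, and_comm]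

def Matrix.kerFromBlocksZeroZeroEquiv (B : Matrix m n R) (C : Matrix n m R) :
    LinearMap.ker (fromBlocks 0 B C 0).mulVecLin ≃ₗ[R]
      LinearMap.ker C.mulVecLin × LinearMap.ker B.mulVecLin where
  toFun x := (⟨x.1 ∘ Sum.inl, ((mem_ker_fromBlocks_zero_zero_iff B C x).1 x.2).1⟩,
    ⟨x.1 ∘ Sum.inr, ((mem_ker_fromBlocks_zero_zero_iff B C x).1 x.2).2⟩)
  invFun y := ⟨Sum.elim y.1 y.2, (mem_ker_fromBlocks_zero_zero_iff B C _).2 ⟨y.1.2, y.2.2⟩⟩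
  map_add' _ _ := rfl
  map_smul' _ _ := rfl
  left_inv x := Subtype.ext (Sum.elim_comp_inl_inr x.1)
  right_inv _ := rfl

end

theorem Matrix.finrank_ker_mulVecLin_add_card {K m n : Type*} [Field K] [Fintype m] [Fintype n]
    (A : Matrix m n K) :
    Module.finrank K (LinearMap.ker A.mulVecLin) + Fintype.card m =
      Module.finrank K (LinearMap.ker Aᵀ.mulVecLin) + Fintype.card n := by
  have hA := LinearMap.finrank_range_add_finrank_ker A.mulVecLin
  have hAt := LinearMap.finrank_range_add_finrank_ker Aᵀ.mulVecLin
  have hrank : Aᵀ.rank = A.rank := rank_transpose A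
  simp only [Module.finrank_fintype_fun_eq_card] at hA hAt
  unfold Matrix.rank at hrank
  omega

theorem neg_one_pow_fin_two_of_ne {R : Type*} [Ring R] {a b : Fin 2} (h : a ≠ b) :
    (-1 : R) ^ (a : ℕ) = -(-1) ^ (b : ℕ) := by
  fin_cases a <;> fin_cases b <;> simp_all

theorem SimpleGraph.Reachable.eq_of_forall_adj {W α : Type*} {G : SimpleGraph W} {f : W → α}
    (hf : ∀ ⦃u v⦄, G.Adj u v → f u = f v) {u v : W} (h : G.Reachable u v) : f u = f v := by
  obtain ⟨p⟩ := h
  induction p with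
  | nil => rfl
  | cons hadj _ ih => exact (hf hadj).trans ih

theorem incMat_transpose_mulVec_apply (G : SimpleGraph V) (x : V → ℝ) {u v : V}
    (h : G.Adj u v) : ((incMat G)ᵀ *ᵥ x) ⟨s(u, v), h⟩ = x u + x v := by
  have hpair : Finset.univ.filter (· ∈ s(u, v)) = {u, v} := by
    ext; simp
  simp only [mulVec, dotProduct, transpose_apply, incMat, of_apply, ite_mul, one_mul, zero_mul]
  rw [← Finset.sum_filter, hpair, Finset.sum_pair h.ne]

theorem mem_ker_incMat_transpose_iff (G : SimpleGraph V) (x : V → ℝ) :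
    x ∈ LinearMap.ker (incMat G)ᵀ.mulVecLin ↔ ∀ ⦃u v⦄, G.Adj u v → x u + x v = 0 := by
  rw [LinearMap.mem_ker, mulVecLin_apply, funext_iff]
  constructor
  · intro hx u v h
    rw [← incMat_transpose_mulVec_apply G x h]
    exact hx _
  · rintro hx ⟨e, he⟩
    induction e using Sym2.ind with
    | _ u v => exact (incMat_transpose_mulVec_apply G x he).trans (hx he)

theorem ker_incMat_transpose_eq_span (G : SimpleGraph V) (hG : G.Connected)
    (c : G.Coloring (Fin 2)) :
    LinearMap.ker (incMat G)ᵀ.mulVecLin = ℝ ∙ fun v => (-1 : ℝ) ^ (c v : ℕ) := by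
  set s : V → ℝ := fun v => (-1 : ℝ) ^ (c v : ℕ)
  have hs_adj : ∀ ⦃u v⦄, G.Adj u v → s u = -s v := fun _ _ h =>
    neg_one_pow_fin_two_of_ne (c.valid h)
  have hs_sq : ∀ v, s v * s v = 1 := fun v => by
    rw [← mul_pow, neg_one_mul, neg_neg, one_pow]
  apply le_antisymm
  · intro x hx
    rw [mem_ker_incMat_transpose_iff] at hx
    obtain ⟨r⟩ := hG.nonempty
    have hconst : ∀ v, x v * s v = x r * s r := fun v =>
      (hG.preconnected v r).eq_of_forall_adj (f := fun v => x v * s v) fun a b h => by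
        rw [eq_neg_of_add_eq_zero_left (hx h), hs_adj h, neg_mul_neg]
    refine Submodule.mem_span_singleton.2 ⟨x r * s r, funext fun v => ?_⟩
    calc (x r * s r) * s v = x v * (s v * s v) := by rw [← hconst v, mul_assoc]
      _ = x v := by rw [hs_sq, mul_one]
  · rw [Submodule.span_singleton_le_iff_mem, mem_ker_incMat_transpose_iff]
    intro u v h
    rw [hs_adj h, neg_add_cancel]

theorem finrank_ker_incMat_transpose_eq_one (G : SimpleGraph V) (hG : G.Connected)
    (hbip : G.IsBipartite) : Module.finrank ℝ (LinearMap.ker (incMat G)ᵀ.mulVecLin) = 1 := by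
  obtain ⟨c⟩ := hbip
  obtain ⟨r⟩ := hG.nonempty
  rw [ker_incMat_transpose_eq_span G hG c]
  refine finrank_span_singleton fun h => ?_
  simpa using congrFun h r

theorem finrank_ker_incMat_eq_zero_of_isTree (T : SimpleGraph V) (hT : T.IsTree) :
    Module.finrank ℝ (LinearMap.ker (incMat T).mulVecLin) = 0 := by
  have hcard : Fintype.card T.edgeSet + 1 = Fintype.card V := by
    rw [← SimpleGraph.edgeFinset_card, hT.card_edgeFinset]
  have := (incMat T).finrank_ker_mulVecLin_add_card
  rw [finrank_ker_incMat_transpose_eq_one T hT.connected hT.isBipartite] at this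
  omega

/-- The subdivision of any tree is singular with nullity exactly 1. -/
theorem stmt_15 (T : SimpleGraph V) (hT : T.IsTree) :
    nullity (subdivAdj T) = 1 := by
  rw [nullity, subdivAdj, (kerFromBlocksZeroZeroEquiv _ _).finrank_eq, Module.finrank_prod,
    finrank_ker_incMat_transpose_eq_one T hT.connected hT.isBipartite,
    finrank_ker_incMat_eq_zero_of_isTree T hT]
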